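/- Let n ≥ 1, let 𝔹ⁿ = {z ∈ ℂⁿ : |z| < 1}, and let ψ : 𝔹ⁿ → ℝ be smooth. If for each k ∈ {1,…,n} the function z ↦ (1 − |z|²) ∂ψ/∂z̄_k is holomorphic on 𝔹ⁿ, then there exist real constants A and B such that ψ(z) = A + B log(1 − |z|²) for all z ∈ 𝔹ⁿ. (The hypothesis says that the gradient field (∂̄ψ)^♯ of ψ with respect to the conformally flat metric g_{j k̄} = δ_{jk}/(1 − |z|²) is holomorphic.) -/

import Mathlib

/-!
Put `Fₖ = (1 − |z|²) ∂ψ/∂z̄ₖ`. Since `ψ` is real, the matrix `∂ⱼ∂̄ₖψ = ∂ⱼ(Fₖ/(1 − |z|²))` is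
Hermitian, which is a relation between `z`, `z̄`, the `Fₖ`, their derivatives and their conjugates.
Differentiating it twice in holomorphic directions kills every antiholomorphic term and leaves an
identity `(1 − |z|²) g = Σₚ z̄ₚ hₚ` between functions annihilated by `∂̄`. Applying `∂̄_q` to it
gives `h_q = −z_q g`, hence `(1 − |z|² + |z|²) g = 0`, so all `hₚ` vanish: all second derivatives
of `F` are zero. The first derivatives of `F` are then constant, and the once-differentiated
relation together with the relation at `0` gives `Fₖ = c zₖ` with `c` real. Now
`ψ + c log(1 − |z|²)` has vanishing `∂̄`, hence, being real, vanishing differential.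
-/

open Complex MeasureTheory Finset

noncomputable section

/-- The Wirtinger derivative `∂f/∂z̄ₖ` of a (real-differentiable) function
`f : ℂⁿ → ℂ`, namely `½(∂f/∂xₖ + i ∂f/∂yₖ)`. -/
def wirtZBar {n : ℕ} (f : (Fin n → ℂ) → ℂ) (k : Fin n) (z : Fin n → ℂ) : ℂ :=
  (1 / 2 : ℂ) *
    (fderiv ℝ f z (Pi.single k 1) + Complex.I * fderiv ℝ f z (Pi.single k Complex.I))

/-- The Wirtinger derivative `∂ψ/∂z̄ₖ` of a real-valued function. -/
def wirtZBarR {n : ℕ} (ψ : (Fin n → ℂ) → ℝ) (k : Fin n) (z : Fin n → ℂ) : ℂ :=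
  wirtZBar (fun w => (ψ w : ℂ)) k z

/-- `|z|² = Σ |zₖ|²` for `z ∈ ℂⁿ`. -/
def normSq' {n : ℕ} (z : Fin n → ℂ) : ℝ := ∑ i, Complex.normSq (z i)

/-- The open unit ball `𝔹ⁿ ⊂ ℂⁿ`. -/
def unitBall (n : ℕ) : Set (Fin n → ℂ) := {z | normSq' z < 1}

open scoped ContDiff
open ComplexConjugate

section Calculus

variable {𝕜 E G : Type*} [NontriviallyNormedField 𝕜] [NormedAddCommGroup E] [NormedSpace 𝕜 E]
  [NormedAddCommGroup G] [NormedSpace 𝕜 G] {f : E → G} {x : E}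

theorem ContDiffAt.hasFDerivAt_fderiv_apply (hf : ContDiffAt 𝕜 2 f x) (w : E) :
    HasFDerivAt (fun y => fderiv 𝕜 f y w) ((fderiv 𝕜 (fderiv 𝕜 f) x).flip w) x := by
  have hdf : DifferentiableAt 𝕜 (fderiv 𝕜 f) x :=
    (hf.fderiv_right (m := 1) (by norm_num)).differentiableAt (by norm_num)
  exact (ContinuousLinearMap.apply 𝕜 G w).hasFDerivAt.comp x hdf.hasFDerivAt

end Calculus

section Conj

variable {E : Type*} [NormedAddCommGroup E] [NormedSpace ℝ E] {f : E → ℂ} {x : E}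
  {m : WithTop ℕ∞}

@[fun_prop]
theorem DifferentiableAt.conj (hf : DifferentiableAt ℝ f x) :
    DifferentiableAt ℝ (fun y => conj (f y)) x :=
  hf.star

@[fun_prop]
theorem ContDiff.conj (hf : ContDiff ℝ m f) : ContDiff ℝ m fun y => conj (f y) :=
  conjCLE.toContinuousLinearMap.contDiff.comp hf

end Conj

section Wirtinger

variable {n : ℕ} {f g : (Fin n → ℂ) → ℂ} {z : Fin n → ℂ} {s : Set (Fin n → ℂ)}
  {ε : ℂ} {j k : Fin n}

/-- `wirt (-I) k` is `∂/∂zₖ` and `wirt I k` is `∂/∂z̄ₖ`. -/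
def wirt (ε : ℂ) (k : Fin n) (f : (Fin n → ℂ) → ℂ) (z : Fin n → ℂ) : ℂ :=
  (1 / 2 : ℂ) * (fderiv ℝ f z (Pi.single k 1) + ε * fderiv ℝ f z (Pi.single k I))

theorem wirt_add (hf : DifferentiableAt ℝ f z) (hg : DifferentiableAt ℝ g z) :
    wirt ε k (fun y => f y + g y) z = wirt ε k f z + wirt ε k g z := by
  simp only [wirt, fderiv_fun_add hf hg, add_apply]
  ring

theorem wirt_sub (hf : DifferentiableAt ℝ f z) (hg : DifferentiableAt ℝ g z) :
    wirt ε k (fun y => f y - g y) z = wirt ε k f z - wirt ε k g z := by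
  simp only [wirt, fderiv_fun_sub hf hg, sub_apply]
  ring

theorem wirt_mul (hf : DifferentiableAt ℝ f z) (hg : DifferentiableAt ℝ g z) :
    wirt ε k (fun y => f y * g y) z = wirt ε k f z * g z + f z * wirt ε k g z := by
  simp only [wirt, fderiv_fun_mul hf hg, add_apply, smul_apply, smul_eq_mul]
  ring

theorem wirt_sum {ι : Type*} {t : Finset ι} {f : ι → (Fin n → ℂ) → ℂ}
    (hf : ∀ i ∈ t, DifferentiableAt ℝ (f i) z) :
    wirt ε k (fun y => ∑ i ∈ t, f i y) z = ∑ i ∈ t, wirt ε k (f i) z := by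
  simp only [wirt, fderiv_fun_sum hf, _root_.sum_apply, Finset.mul_sum, mul_add,
    Finset.sum_add_distrib]

theorem wirt_const (c : ℂ) : wirt ε k (fun _ => c) z = 0 := by
  simp [wirt]

theorem wirt_conj : wirt ε k (fun y => conj (f y)) z = conj (wirt (conj ε) k f z) := by
  rw [wirt, wirt, show (fun y => conj (f y)) = fun y => star (f y) from rfl, fderiv_star]
  simp [map_ofNat]

theorem conj_wirt_ofReal {ρ : (Fin n → ℂ) → ℝ} :
    conj (wirt ε k (fun y => (ρ y : ℂ)) z) = wirt (conj ε) k (fun y => (ρ y : ℂ)) z := by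
  conv_rhs => rw [show (fun y => (ρ y : ℂ)) = fun y => conj (ρ y : ℂ) by simp]
  rw [wirt_conj, conj_conj]

theorem wirt_ofReal_comp {ρ : (Fin n → ℂ) → ℝ} {g : ℝ → ℝ} {g' : ℝ}
    (hg : HasDerivAt g g' (ρ z)) (hρ : DifferentiableAt ℝ ρ z) :
    wirt ε k (fun y => (g (ρ y) : ℂ)) z = g' * wirt ε k (fun y => (ρ y : ℂ)) z := by
  have hgρ := (ofRealCLM.hasFDerivAt.comp z (hg.comp_hasFDerivAt z hρ.hasFDerivAt)).fderiv
  have hρ' := (ofRealCLM.hasFDerivAt.comp z hρ.hasFDerivAt).fderiv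
  simp only [wirt, Function.comp_def, ofRealCLM_apply] at hgρ hρ' ⊢
  simp only [hgρ, hρ', ContinuousLinearMap.comp_smulₛₗ, Real.ringHom_apply, smul_apply,
    ContinuousLinearMap.comp_apply, ofRealCLM_apply, real_smul]
  ring

theorem wirt_I_coord : wirt I j (fun y => y k) z = 0 := by
  have : (fun y : Fin n → ℂ => y k) = ContinuousLinearMap.proj (R := ℝ) (φ := fun _ => ℂ) k := rfl
  rw [wirt, this, ContinuousLinearMap.fderiv]
  simp only [ContinuousLinearMap.proj_apply, Pi.single_apply, mul_ite, I_mul_I, mul_zero]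
  split_ifs <;> ring

theorem wirt_neg_I_coord : wirt (-I) j (fun y => y k) z = if j = k then 1 else 0 := by
  have : (fun y : Fin n → ℂ => y k) = ContinuousLinearMap.proj (R := ℝ) (φ := fun _ => ℂ) k := rfl
  rw [wirt, this, ContinuousLinearMap.fderiv]
  simp only [ContinuousLinearMap.proj_apply, Pi.single_apply, eq_comm, mul_ite, neg_mul, I_mul_I,
    neg_neg, mul_zero]
  split_ifs <;> ring

theorem wirt_I_conj_coord : wirt I j (fun y => conj (y k)) z = if j = k then 1 else 0 := by
  rw [wirt_conj, conj_I, wirt_neg_I_coord]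
  split_ifs <;> simp

theorem wirt_neg_I_conj_coord : wirt (-I) j (fun y => conj (y k)) z = 0 := by
  rw [wirt_conj, map_neg, conj_I, neg_neg, wirt_I_coord, map_zero]

theorem wirt_congr (hs : IsOpen s) (h : Set.EqOn f g s) (hz : z ∈ s) :
    wirt ε k f z = wirt ε k g z := by
  simp only [wirt, (h.eventuallyEq_of_mem (hs.mem_nhds hz)).fderiv_eq]

theorem wirt_eq_zero_of_eqOn_zero (hs : IsOpen s) (h : ∀ y ∈ s, f y = 0) (hz : z ∈ s) :
    wirt ε k f z = 0 := by
  rw [wirt_congr hs (g := fun _ => 0) h hz, wirt_const]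

theorem wirt_I_eq_zero_of_differentiableAt (h : DifferentiableAt ℂ f z) : wirt I k f z = 0 := by
  have hI : (Pi.single k I : Fin n → ℂ) = I • Pi.single k 1 := by simp [← Pi.single_smul]
  rw [wirt, h.fderiv_restrictScalars ℝ, ContinuousLinearMap.coe_restrictScalars', hI, map_smul,
    smul_eq_mul, ← mul_assoc, I_mul_I]
  ring

theorem differentiableAt_wirt (hf : ContDiffAt ℝ 2 f z) : DifferentiableAt ℝ (wirt ε k f) z := by
  have := hf.hasFDerivAt_fderiv_apply
  unfold wirt
  fun_prop

theorem wirt_comm (hf : ContDiffAt ℝ 2 f z) (ε' : ℂ) (j k : Fin n) :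
    wirt ε j (wirt ε' k f) z = wirt ε' k (wirt ε j f) z := by
  have hsymm := hf.isSymmSndFDerivAt (by simp)
  have hw : ∀ (ε : ℂ) k, HasFDerivAt (wirt ε k f) ((1 / 2 : ℂ) •
      ((fderiv ℝ (fderiv ℝ f) z).flip (Pi.single k 1) +
        ε • (fderiv ℝ (fderiv ℝ f) z).flip (Pi.single k I))) z := fun ε k =>
    ((hf.hasFDerivAt_fderiv_apply _).add
      ((hf.hasFDerivAt_fderiv_apply _).const_mul ε)).const_mul (1 / 2 : ℂ)
  simp only [wirt] at hw ⊢
  simp only [(hw _ _).fderiv, add_apply, smul_apply, ContinuousLinearMap.flip_apply, smul_eq_mul,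
    hsymm (Pi.single j 1), hsymm (Pi.single j I)]
  ring

theorem contDiffOn_wirt (hs : IsOpen s) (hf : ContDiffOn ℝ ∞ f s) :
    ContDiffOn ℝ ∞ (wirt ε k f) s := by
  have := hf.fderiv_of_isOpen hs (m := ∞) le_rfl
  unfold wirt
  fun_prop

theorem fderiv_eq_zero_of_wirt_eq_zero (h : ∀ k, wirt (-I) k f z = 0)
    (h' : ∀ k, wirt I k f z = 0) : fderiv ℝ f z = 0 := by
  simp only [wirt] at h h'
  have h1 : ∀ k, fderiv ℝ f z (Pi.single k 1) = 0 := fun k => by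
    linear_combination h k + h' k
  have hI : ∀ k, fderiv ℝ f z (Pi.single k I) = 0 := fun k => by
    linear_combination I * (h k - h' k) + fderiv ℝ f z (Pi.single k I) * I_sq
  ext v
  have hv : ∀ k, (Pi.single k (v k) : Fin n → ℂ)
      = (v k).re • (Pi.single k 1 : Fin n → ℂ) + (v k).im • (Pi.single k I : Fin n → ℂ) := by
    intro k
    rw [← Pi.single_smul, ← Pi.single_smul, ← Pi.single_add, real_smul, real_smul, mul_one,
      re_add_im]
  rw [← Finset.univ_sum_single v]
  simp [hv, h1, hI]

theorem IsOpen.eq_of_wirt_eq_zero (hs : IsOpen s) (hs' : IsPreconnected s)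
    (hf : DifferentiableOn ℝ f s) (h : ∀ y ∈ s, ∀ k, wirt (-I) k f y = 0)
    (h' : ∀ y ∈ s, ∀ k, wirt I k f y = 0) {x y : Fin n → ℂ} (hx : x ∈ s) (hy : y ∈ s) :
    f x = f y :=
  hs.is_const_of_fderiv_eq_zero hs' hf
    (fun w hw => fderiv_eq_zero_of_wirt_eq_zero (h w hw) (h' w hw)) hx hy

end Wirtinger

section Ball

variable {n : ℕ} {z : Fin n → ℂ} {k : Fin n}

theorem unitBall_eq_preimage_ball :
    unitBall n = WithLp.toLp 2 ⁻¹' Metric.ball (0 : EuclideanSpace ℂ (Fin n)) 1 := by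
  ext z
  rw [Set.mem_preimage, mem_ball_zero_iff, ← sq_lt_one_iff₀ (norm_nonneg _),
    EuclideanSpace.norm_sq_eq]
  simp [unitBall, normSq', Complex.sq_norm]

theorem isOpen_unitBall : IsOpen (unitBall n) := by
  rw [unitBall_eq_preimage_ball]
  exact Metric.isOpen_ball.preimage (PiLp.continuous_toLp 2 _)

theorem convex_unitBall : Convex ℝ (unitBall n) := by
  rw [unitBall_eq_preimage_ball]
  exact (convex_ball _ _).linear_preimage (WithLp.linearEquiv 2 ℝ (Fin n → ℂ)).symm.toLinearMap

theorem zero_mem_unitBall : (0 : Fin n → ℂ) ∈ unitBall n := by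
  simp [unitBall, normSq']

def oneSubNormSq (z : Fin n → ℂ) : ℂ := ((1 - normSq' z : ℝ) : ℂ)

theorem oneSubNormSq_eq : oneSubNormSq z = 1 - ∑ i, z i * conj (z i) := by
  simp [oneSubNormSq, normSq', mul_conj]

theorem conj_oneSubNormSq : conj (oneSubNormSq z) = oneSubNormSq z := conj_ofReal _

theorem oneSubNormSq_zero : oneSubNormSq (0 : Fin n → ℂ) = 1 := by
  simp [oneSubNormSq, normSq']

theorem oneSubNormSq_ne_zero (hz : z ∈ unitBall n) : oneSubNormSq z ≠ 0 :=
  ofReal_ne_zero.2 (sub_pos.2 hz).ne'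

@[fun_prop]
theorem contDiff_oneSubNormSq : ContDiff ℝ ∞ (oneSubNormSq (n := n)) := by
  simp only [funext fun z => @oneSubNormSq_eq n z]
  fun_prop

@[fun_prop]
theorem differentiable_oneSubNormSq : Differentiable ℝ (oneSubNormSq (n := n)) :=
  contDiff_oneSubNormSq.differentiable (by simp)

theorem differentiable_one_sub_normSq' : Differentiable ℝ fun y : Fin n → ℂ => 1 - normSq' y := by
  simpa [Function.comp_def, oneSubNormSq] using reCLM.differentiable.comp
    (differentiable_oneSubNormSq (n := n))

theorem wirt_I_oneSubNormSq : wirt I k oneSubNormSq z = -z k := by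
  simp (disch := fun_prop) only [funext fun z => @oneSubNormSq_eq n z, wirt_sub, wirt_const,
    wirt_sum, wirt_mul, wirt_I_coord, wirt_I_conj_coord]
  simp

theorem wirt_neg_I_oneSubNormSq : wirt (-I) k oneSubNormSq z = -conj (z k) := by
  simp (disch := fun_prop) only [funext fun z => @oneSubNormSq_eq n z, wirt_sub, wirt_const,
    wirt_sum, wirt_mul, wirt_neg_I_coord, wirt_neg_I_conj_coord]
  simp

theorem wirt_I_log_one_sub_normSq' (hz : z ∈ unitBall n) :
    wirt I k (fun y => (Real.log (1 - normSq' y) : ℂ)) z = -z k / oneSubNormSq z := by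
  rw [wirt_ofReal_comp (Real.hasDerivAt_log (sub_pos.2 hz).ne')
      differentiable_one_sub_normSq'.differentiableAt,
    show (fun y => ((1 - normSq' y : ℝ) : ℂ)) = oneSubNormSq from rfl, wirt_I_oneSubNormSq,
    ofReal_inv, oneSubNormSq, inv_mul_eq_div]

end Ball

section SmoothHolo

variable {n : ℕ} {f g : (Fin n → ℂ) → ℂ} {s : Set (Fin n → ℂ)} {z : Fin n → ℂ} {k : Fin n}

/-- Holomorphy with smoothness built in, so that the class is stable under `∂/∂zₖ` by symmetry
of second derivatives; for bare complex differentiability in several variables that would need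
Osgood's lemma. -/
def IsSmoothHoloOn (f : (Fin n → ℂ) → ℂ) (s : Set (Fin n → ℂ)) : Prop :=
  ContDiffOn ℝ ∞ f s ∧ ∀ z ∈ s, ∀ k, wirt I k f z = 0

namespace IsSmoothHoloOn

theorem differentiableAt (hf : IsSmoothHoloOn f s) (hs : IsOpen s) (hz : z ∈ s) :
    DifferentiableAt ℝ f z :=
  (hf.1.contDiffAt (hs.mem_nhds hz)).differentiableAt (by simp)

theorem wirt_I (hf : IsSmoothHoloOn f s) (hz : z ∈ s) : wirt I k f z = 0 :=
  hf.2 z hz k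

theorem wirt_neg_I (hf : IsSmoothHoloOn f s) (hs : IsOpen s) :
    IsSmoothHoloOn (wirt (-I) k f) s := by
  refine ⟨contDiffOn_wirt hs hf.1, fun z hz j => ?_⟩
  rw [wirt_comm ((hf.1.contDiffAt (hs.mem_nhds hz)).of_le ENat.LEInfty.out),
    wirt_eq_zero_of_eqOn_zero hs (fun y hy => hf.wirt_I hy) hz]

theorem const_mul (hf : IsSmoothHoloOn f s) (hs : IsOpen s) (c : ℂ) :
    IsSmoothHoloOn (fun y => c * f y) s :=
  ⟨contDiffOn_const.mul hf.1, fun z hz j => by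
    rw [wirt_mul (differentiableAt_const c) (hf.differentiableAt hs hz), wirt_const,
      hf.wirt_I hz]
    ring⟩

theorem sub (hf : IsSmoothHoloOn f s) (hg : IsSmoothHoloOn g s) (hs : IsOpen s) :
    IsSmoothHoloOn (fun y => f y - g y) s :=
  ⟨hf.1.sub hg.1, fun z hz j => by
    rw [wirt_sub (hf.differentiableAt hs hz) (hg.differentiableAt hs hz), hf.wirt_I hz,
      hg.wirt_I hz, sub_zero]⟩

/-- `∂/∂z̄_q` of the identity gives `h_q = -z_q g`; substituted back, `(1 - |z|² + |z|²) g = 0`. -/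
theorem eq_zero_of_oneSubNormSq_mul_eq_sum {h : Fin n → (Fin n → ℂ) → ℂ}
    (hg : IsSmoothHoloOn g (unitBall n)) (hh : ∀ p, IsSmoothHoloOn (h p) (unitBall n))
    (heq : ∀ y ∈ unitBall n, oneSubNormSq y * g y = ∑ p, conj (y p) * h p y)
    (hz : z ∈ unitBall n) (p : Fin n) : h p z = 0 := by
  have hdg := hg.differentiableAt isOpen_unitBall hz
  have hdh := fun p => (hh p).differentiableAt isOpen_unitBall hz
  have hh_eq : ∀ q, h q z = -z q * g z := by
    intro q
    have := wirt_eq_zero_of_eqOn_zero isOpen_unitBall (ε := I) (k := q)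
      (fun y hy => sub_eq_zero.2 (heq y hy)) hz
    simp (disch := fun_prop) only [wirt_sub, wirt_mul, wirt_sum, wirt_I_oneSubNormSq,
      hg.wirt_I hz, (hh _).wirt_I hz, wirt_I_conj_coord] at this
    simpa [sub_eq_zero, eq_comm] using this
  have hg0 : g z = 0 := by
    have := heq z hz
    simp only [hh_eq, oneSubNormSq_eq] at this
    have hsum : ∑ p, conj (z p) * (-z p * g z) = -(∑ p, z p * conj (z p)) * g z := by
      rw [neg_mul, Finset.sum_mul, ← Finset.sum_neg_distrib]
      exact Finset.sum_congr rfl fun p _ => by ring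
    linear_combination this + hsum
  rw [hh_eq, hg0, mul_zero]

end IsSmoothHoloOn

end SmoothHolo

section Rigidity

variable {n : ℕ} {F : Fin n → (Fin n → ℂ) → ℂ} {z : Fin n → ℂ}

/-- For `Fₖ = (1 - |z|²) ∂ψ/∂z̄ₖ` with `ψ` real, this is the Hermitian symmetry of
`∂ⱼ∂̄ₖψ = ∂ⱼ(Fₖ/(1 - |z|²))`, multiplied by `(1 - |z|²)²`. -/
def IsHermitianHessian (F : Fin n → (Fin n → ℂ) → ℂ) : Prop :=
  ∀ j k, ∀ z ∈ unitBall n, oneSubNormSq z * (wirt (-I) j (F k) z - conj (wirt (-I) k (F j) z))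
    + conj (z j) * F k z - z k * conj (F j z) = 0

namespace IsHermitianHessian

theorem wirt_identity (hherm : IsHermitianHessian F)
    (hF : ∀ k, IsSmoothHoloOn (F k) (unitBall n)) (hz : z ∈ unitBall n) (l j k : Fin n) :
    oneSubNormSq z * wirt (-I) l (wirt (-I) j (F k)) z + conj (z j) * wirt (-I) l (F k) z
      - conj (z l) * (wirt (-I) j (F k) z - conj (wirt (-I) k (F j) z))
      - (if l = k then 1 else 0) * conj (F j z) = 0 := by
  have ha := fun j k => (hF k).wirt_neg_I (k := j) isOpen_unitBall
  have hdF := fun k => (hF k).differentiableAt isOpen_unitBall hz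
  have hda := fun j k => (ha j k).differentiableAt isOpen_unitBall hz
  have hFI := fun l k => (hF k).wirt_I (k := l) hz
  have haI := fun l j k => (ha j k).wirt_I (k := l) hz
  have h := wirt_eq_zero_of_eqOn_zero isOpen_unitBall (ε := -I) (k := l) (hherm j k) hz
  simp (disch := fun_prop) only [wirt_add, wirt_sub, wirt_mul, wirt_conj,
    wirt_neg_I_oneSubNormSq, wirt_neg_I_coord, wirt_I_coord, map_neg, conj_I, neg_neg,
    hFI, haI, map_zero] at h
  linear_combination h

theorem wirt_wirt_identity (hherm : IsHermitianHessian F)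
    (hF : ∀ k, IsSmoothHoloOn (F k) (unitBall n)) (hz : z ∈ unitBall n) (m l j k : Fin n) :
    oneSubNormSq z * wirt (-I) m (wirt (-I) l (wirt (-I) j (F k))) z
      = conj (z l) * wirt (-I) m (wirt (-I) j (F k)) z
        + conj (z m) * wirt (-I) l (wirt (-I) j (F k)) z
        - conj (z j) * wirt (-I) m (wirt (-I) l (F k)) z := by
  have ha := fun j k => (hF k).wirt_neg_I (k := j) isOpen_unitBall
  have hK := fun l j k => (ha j k).wirt_neg_I (k := l) isOpen_unitBall
  have hdF := fun k => (hF k).differentiableAt isOpen_unitBall hz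
  have hda := fun j k => (ha j k).differentiableAt isOpen_unitBall hz
  have hdK := fun l j k => (hK l j k).differentiableAt isOpen_unitBall hz
  have hFI := fun l k => (hF k).wirt_I (k := l) hz
  have haI := fun l j k => (ha j k).wirt_I (k := l) hz
  have h := wirt_eq_zero_of_eqOn_zero isOpen_unitBall (ε := -I) (k := m)
    (fun y hy => hherm.wirt_identity hF hy l j k) hz
  simp (disch := fun_prop) only [wirt_add, wirt_sub, wirt_mul, wirt_conj, wirt_const,
    wirt_neg_I_oneSubNormSq, wirt_I_coord, map_neg, conj_I, neg_neg, hFI, haI, map_zero] at h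
  linear_combination h

theorem wirt_wirt_eq_zero (hherm : IsHermitianHessian F)
    (hF : ∀ k, IsSmoothHoloOn (F k) (unitBall n)) (hz : z ∈ unitBall n) (l j k : Fin n) :
    wirt (-I) l (wirt (-I) j (F k)) z = 0 := by
  have hK := fun l j k => ((hF k).wirt_neg_I (k := j) isOpen_unitBall).wirt_neg_I (k := l)
    isOpen_unitBall
  -- `wirt_wirt_identity` with `m = l`, read as `(1 - |z|²) g = Σₚ z̄ₚ hₚ`
  have hzero := ((hK l j k).wirt_neg_I (k := l) isOpen_unitBall).eq_zero_of_oneSubNormSq_mul_eq_sum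
    (h := fun p y => (if p = l then 2 else 0) * wirt (-I) l (wirt (-I) j (F k)) y
      - (if p = j then 1 else 0) * wirt (-I) l (wirt (-I) l (F k)) y)
    (fun p => ((hK l j k).const_mul isOpen_unitBall _).sub
      ((hK l l k).const_mul isOpen_unitBall _) isOpen_unitBall)
    (fun y hy => by
      rw [hherm.wirt_wirt_identity hF hy]
      simp only [ite_mul, zero_mul, one_mul, mul_sub, mul_ite, ← mul_assoc, mul_zero,
        Finset.sum_sub_distrib, Finset.sum_ite_eq', Finset.mem_univ, if_true]
      ring) hz l
  by_cases hlj : l = j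
  · subst hlj
    rw [if_pos rfl, if_pos rfl] at hzero
    linear_combination hzero
  · rw [if_pos rfl, if_neg hlj] at hzero
    linear_combination hzero / 2

theorem wirt_eq_wirt_zero (hherm : IsHermitianHessian F)
    (hF : ∀ k, IsSmoothHoloOn (F k) (unitBall n)) (hz : z ∈ unitBall n) (j k : Fin n) :
    wirt (-I) j (F k) z = wirt (-I) j (F k) 0 := by
  have ha := (hF k).wirt_neg_I (k := j) isOpen_unitBall
  exact isOpen_unitBall.eq_of_wirt_eq_zero convex_unitBall.isPreconnected
    (ha.1.differentiableOn (by simp)) (fun y hy l => hherm.wirt_wirt_eq_zero hF hy l j k)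
    (fun y hy l => ha.wirt_I hy) hz zero_mem_unitBall

theorem exists_eq_real_mul_coord (hherm : IsHermitianHessian F)
    (hF : ∀ k, IsSmoothHoloOn (F k) (unitBall n)) :
    ∃ c : ℝ, ∀ k, ∀ z ∈ unitBall n, F k z = c * z k := by
  rcases isEmpty_or_nonempty (Fin n) with _ | ⟨⟨j⟩⟩
  · exact ⟨0, fun k => isEmptyElim k⟩
  have hsymm : ∀ j k, wirt (-I) j (F k) 0 = conj (wirt (-I) k (F j) 0) := fun j k => by
    simpa [oneSubNormSq_zero, sub_eq_zero] using hherm j k 0 zero_mem_unitBall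
  set c := wirt (-I) j (F j) 0
  have hc : conj c = c := (hsymm j j).symm
  refine ⟨c.re, fun k z hz => ?_⟩
  have h := hherm.wirt_identity hF hz j k j
  rw [hherm.wirt_wirt_eq_zero hF hz, hherm.wirt_eq_wirt_zero hF hz,
    hherm.wirt_eq_wirt_zero hF hz, hherm.wirt_eq_wirt_zero hF hz, hsymm k j, if_pos rfl] at h
  have h' := congrArg conj h
  simp only [map_sub, map_mul, map_zero, conj_conj, one_mul, mul_zero, zero_add, sub_self] at h'
  rw [conj_eq_iff_re.1 hc]
  linear_combination -h' + z k * hc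

end IsHermitianHessian

end Rigidity

section GradientField

variable {n : ℕ} {ψ : (Fin n → ℂ) → ℝ} {z : Fin n → ℂ} {k : Fin n}

/-- The components of the gradient field `(∂̄ψ)^♯` for the metric `δⱼₖ/(1 - |z|²)`. -/
def gradField (ψ : (Fin n → ℂ) → ℝ) (k : Fin n) (z : Fin n → ℂ) : ℂ :=
  oneSubNormSq z * wirt I k (fun y => (ψ y : ℂ)) z

theorem isSmoothHoloOn_gradField (hψ : ContDiffOn ℝ ∞ ψ (unitBall n))
    (hhol : DifferentiableOn ℂ (gradField ψ k) (unitBall n)) :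
    IsSmoothHoloOn (gradField ψ k) (unitBall n) :=
  ⟨contDiff_oneSubNormSq.contDiffOn.mul (contDiffOn_wirt isOpen_unitBall
      (ofRealCLM.contDiff.comp_contDiffOn hψ)),
    fun _ hz _ => wirt_I_eq_zero_of_differentiableAt
      (hhol.differentiableAt (isOpen_unitBall.mem_nhds hz))⟩

theorem isHermitianHessian_gradField (hψ : ContDiffOn ℝ ∞ ψ (unitBall n)) :
    IsHermitianHessian (gradField ψ) := by
  intro j k z hz
  set Ψ : (Fin n → ℂ) → ℂ := fun y => (ψ y : ℂ)
  have hΨ : ContDiffAt ℝ 2 Ψ z :=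
    ((ofRealCLM.contDiff.comp_contDiffOn hψ).contDiffAt
      (isOpen_unitBall.mem_nhds hz)).of_le ENat.LEInfty.out
  have hconj : ∀ y, conj (gradField ψ j y) = oneSubNormSq y * wirt (-I) j Ψ y := by
    intro y
    rw [gradField, map_mul, conj_oneSubNormSq, conj_wirt_ofReal, conj_I]
  have hdz : wirt (-I) j (gradField ψ k) z
      = -conj (z j) * wirt I k Ψ z + oneSubNormSq z * wirt (-I) j (wirt I k Ψ) z := by
    unfold gradField
    rw [wirt_mul (by fun_prop) (differentiableAt_wirt hΨ), wirt_neg_I_oneSubNormSq]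
  have hdzbar : conj (wirt (-I) k (gradField ψ j) z)
      = -z k * wirt (-I) j Ψ z + oneSubNormSq z * wirt (-I) j (wirt I k Ψ) z := by
    have h := wirt_conj (ε := I) (k := k) (f := gradField ψ j) (z := z)
    rw [conj_I] at h
    rw [← h, funext hconj, wirt_mul (by fun_prop) (differentiableAt_wirt hΨ),
      wirt_I_oneSubNormSq, wirt_comm hΨ]
  rw [hdz, hdzbar, gradField, hconj]
  ring

theorem eq_add_mul_log_of_gradField_eq (hψ : ContDiffOn ℝ ∞ ψ (unitBall n)) {c : ℝ}
    (hc : ∀ k, ∀ z ∈ unitBall n, gradField ψ k z = c * z k) (hz : z ∈ unitBall n) :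
    ψ z = ψ 0 + -c * Real.log (1 - normSq' z) := by
  set φ : (Fin n → ℂ) → ℝ := fun y => ψ y + c * Real.log (1 - normSq' y)
  have hψd : ∀ y ∈ unitBall n, DifferentiableAt ℝ ψ y := fun y hy =>
    (hψ.contDiffAt (isOpen_unitBall.mem_nhds hy)).differentiableAt (by simp)
  have hL : ∀ y ∈ unitBall n, DifferentiableAt ℝ (fun y => Real.log (1 - normSq' y)) y :=
    fun y hy => (differentiable_one_sub_normSq' y).log (sub_pos.2 hy).ne'
  have hI : ∀ y ∈ unitBall n, ∀ k, wirt I k (fun y => (φ y : ℂ)) y = 0 := by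
    intro y hy k
    have hΨd : DifferentiableAt ℝ (fun y => (ψ y : ℂ)) y :=
      ofRealCLM.differentiableAt.comp y (hψd y hy)
    have hLd : DifferentiableAt ℝ (fun y => (Real.log (1 - normSq' y) : ℂ)) y :=
      ofRealCLM.differentiableAt.comp y (hL y hy)
    have hgrad := hc k y hy
    rw [gradField] at hgrad
    have hne := oneSubNormSq_ne_zero hy
    simp only [φ, ofReal_add, ofReal_mul]
    rw [wirt_add hΨd (hLd.const_mul _), wirt_mul (differentiableAt_const _) hLd, wirt_const,
      wirt_I_log_one_sub_normSq' hy]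
    field_simp
    linear_combination hgrad
  have hnegI : ∀ y ∈ unitBall n, ∀ k, wirt (-I) k (fun y => (φ y : ℂ)) y = 0 := by
    intro y hy k
    rw [← conj_I, ← conj_wirt_ofReal, hI y hy k, map_zero]
  have hconst := isOpen_unitBall.eq_of_wirt_eq_zero convex_unitBall.isPreconnected
    (fun y hy => (ofRealCLM.differentiableAt.comp y
      ((hψd y hy).add ((hL y hy).const_mul c))).differentiableWithinAt)
    hnegI hI hz zero_mem_unitBall
  have hφ : φ z = φ 0 := ofReal_injective hconst
  have h0 : normSq' (0 : Fin n → ℂ) = 0 := by simp [normSq']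
  simp only [φ, h0, sub_zero, Real.log_one, mul_zero, add_zero] at hφ
  linarith

end GradientField

theorem stmt1 (n : ℕ) (ψ : (Fin n → ℂ) → ℝ)
    (hψ : ContDiffOn ℝ (⊤ : ℕ∞) ψ (unitBall n))
    (hhol : ∀ k : Fin n,
      DifferentiableOn ℂ
        (fun z => ((1 - normSq' z : ℝ) : ℂ) * wirtZBarR ψ k z) (unitBall n)) :
    ∃ A B : ℝ, ∀ z ∈ unitBall n, ψ z = A + B * Real.log (1 - normSq' z) := by
  obtain ⟨c, hc⟩ := (isHermitianHessian_gradField hψ).exists_eq_real_mul_coord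
    fun k => isSmoothHoloOn_gradField hψ (hhol k)
  exact ⟨ψ 0, -c, fun z hz => eq_add_mul_log_of_gradField_eq hψ hc hz⟩
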